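/- arXiv:2103.04323 — 5 statements merged into one kernel-verified Lean document; each statement's English description precedes it below -/
import Mathlib

section
/- Let a > b > 0 and C₁ > 0, C₂ > 0 be real numbers. Then the series ∑_{l=0}^∞ [ 1 − (max(1 − C₁ · 2^{−l a}, 0))^{C₂ · 2^{l b}} ] converges (its partial sums are bounded). -/
/-!
For large `l` the exponent `t = C₂ 2^{lb}` is at least `1`, so Bernoulli's inequality
`(1 - x)^t ≥ 1 - t x` bounds the `l`-th term by `t x = C₁ C₂ 2^{-l(a-b)}`, a convergent
geometric series because `a > b`.
-/

open Filter

lemma one_sub_max_one_sub_rpow_nonneg {x t : ℝ} (hx : 0 ≤ x) (ht : 0 ≤ t) :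
    0 ≤ 1 - max (1 - x) 0 ^ t := by
  have := Real.rpow_le_one (le_max_right _ _) (max_le (by linarith : 1 - x ≤ 1) zero_le_one) ht
  linarith

lemma one_sub_max_one_sub_rpow_le_mul {x t : ℝ} (hx : 0 ≤ x) (ht : 1 ≤ t) :
    1 - max (1 - x) 0 ^ t ≤ t * x := by
  rcases le_total x 1 with hx1 | hx1
  · have bernoulli := one_add_mul_self_le_rpow_one_add (by linarith : -1 ≤ -x) ht
    rw [← sub_eq_add_neg] at bernoulli
    rw [max_eq_left (by linarith)]
    linarith
  · rw [max_eq_right (by linarith), Real.zero_rpow (by positivity)]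
    nlinarith

theorem summable_one_sub_max_one_sub_rpow {x t : ℕ → ℝ} (hx : ∀ l, 0 ≤ x l)
    (ht : ∀ᶠ l in atTop, 1 ≤ t l) (hsum : Summable fun l => t l * x l) :
    Summable fun l => 1 - max (1 - x l) 0 ^ t l :=
  hsum.of_norm_bounded_eventually_nat <| ht.mono fun l htl => by
    rw [Real.norm_of_nonneg (one_sub_max_one_sub_rpow_nonneg (hx l) (zero_le_one.trans htl))]
    exact one_sub_max_one_sub_rpow_le_mul (hx l) htl

/-- For `a > b > 0` and `C₁, C₂ > 0`, the series
`∑_l [1 - (max (1 - C₁ 2^{-l a}) 0)^{C₂ 2^{l b}}]` is summable. -/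
theorem summable_borel_cantelli_bound (a b C₁ C₂ : ℝ) (hab : b < a) (hb : 0 < b)
    (hC₁ : 0 < C₁) (hC₂ : 0 < C₂) :
    Summable fun l : ℕ =>
      1 - (max (1 - C₁ * (2 : ℝ) ^ (-(l : ℝ) * a)) 0) ^ (C₂ * (2 : ℝ) ^ ((l : ℝ) * b)) := by
  have two_rpow_natCast_mul (c : ℝ) (l : ℕ) : (2 : ℝ) ^ ((l : ℝ) * c) = (2 ^ c) ^ l := by
    rw [mul_comm, Real.rpow_mul_natCast zero_le_two]
  have exponent_tendsto : Tendsto (fun l : ℕ => C₂ * (2 : ℝ) ^ ((l : ℝ) * b)) atTop atTop := by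
    simp_rw [two_rpow_natCast_mul]
    exact (tendsto_pow_atTop_atTop_of_one_lt
      (Real.one_lt_rpow one_lt_two hb)).const_mul_atTop hC₂
  have geometric : Summable fun l : ℕ => ((2 : ℝ) ^ (-(a - b))) ^ l :=
    summable_geometric_of_lt_one (by positivity)
      (Real.rpow_lt_one_of_one_lt_of_neg one_lt_two (by linarith))
  refine summable_one_sub_max_one_sub_rpow (fun l => by positivity)
    (exponent_tendsto.eventually_ge_atTop 1) ((geometric.mul_left (C₁ * C₂)).congr fun l => ?_)
  rw [← two_rpow_natCast_mul, show (l : ℝ) * -(a - b) = l * b + -l * a by ring,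
    Real.rpow_add two_pos]
  ring
end

section
/- Let (Ω, 𝓕, P) be a probability space, let a > b > 0 and C₁ > 0, C₂ > 0 be real numbers, and let (B_l)_{l∈ℕ} be a sequence of measurable events such that P(B_l) ≤ 1 − (max(1 − C₁ · 2^{−l a}, 0))^{C₂ · 2^{l b}} for every l. Then P(limsup_{l→∞} B_l) = 0; that is, almost surely only finitely many of the events B_l occur. -/
set_option maxHeartbeats 1000000


open MeasureTheory

/-- Borel–Cantelli step: if `P (B l) ≤ 1 - (max (1 - C₁ 2^{-l a}) 0)^{C₂ 2^{l b}}` with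
`a > b > 0`, then almost surely only finitely many of the events `B l` occur. -/
theorem borel_cantelli_dyadic {Ω : Type*} [MeasurableSpace Ω] (P : Measure Ω)
    [IsProbabilityMeasure P] (a b C₁ C₂ : ℝ) (hab : b < a) (hb : 0 < b)
    (hC₁ : 0 < C₁) (hC₂ : 0 < C₂)
    (B : ℕ → Set Ω) (hB : ∀ l, MeasurableSet (B l))
    (h : ∀ l : ℕ, P (B l) ≤ ENNReal.ofReal
      (1 - (max (1 - C₁ * (2 : ℝ) ^ (-(l : ℝ) * a)) 0) ^ (C₂ * (2 : ℝ) ^ ((l : ℝ) * b)))) :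
    P (Filter.limsup B Filter.atTop) = 0 := by
  apply measure_limsup_atTop_eq_zero
  -- g l is the geometric bound
  set g : ℕ → ℝ := fun l => C₁ * C₂ * ((2 : ℝ) ^ (b - a)) ^ l with hg
  have hr0 : (0 : ℝ) < (2 : ℝ) ^ (b - a) := Real.rpow_pos_of_pos two_pos _
  have hr1 : (2 : ℝ) ^ (b - a) < 1 := by
    exact Real.rpow_lt_one_of_one_lt_of_neg one_lt_two (by linarith)
  have hgsum : Summable g := by
    apply Summable.mul_left
    exact summable_geometric_of_lt_one hr0.le hr1
  -- eventually the key bound holds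
  have h1 : Filter.Tendsto (fun l : ℕ => C₁ * (2 : ℝ) ^ (-(l : ℝ) * a))
      Filter.atTop (nhds 0) := by
    have : Filter.Tendsto (fun l : ℕ => ((2 : ℝ) ^ (-a)) ^ l) Filter.atTop (nhds 0) := by
      apply tendsto_pow_atTop_nhds_zero_of_lt_one (Real.rpow_pos_of_pos two_pos _).le
      exact Real.rpow_lt_one_of_one_lt_of_neg one_lt_two (by linarith)
    have := this.const_mul C₁
    simpa [← Real.rpow_natCast ((2:ℝ)^(-a)), ← Real.rpow_mul (le_of_lt two_pos),
      mul_comm, neg_mul, mul_neg] using this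
  have h2 : Filter.Tendsto (fun l : ℕ => C₂ * (2 : ℝ) ^ ((l : ℝ) * b))
      Filter.atTop Filter.atTop := by
    apply Filter.Tendsto.const_mul_atTop hC₂
    have : Filter.Tendsto (fun l : ℕ => ((2 : ℝ) ^ b) ^ l) Filter.atTop Filter.atTop := by
      apply tendsto_pow_atTop_atTop_of_one_lt
      rw [← Real.rpow_zero 2]
      exact Real.rpow_lt_rpow_left_iff one_lt_two |>.mpr hb
    simpa [← Real.rpow_natCast ((2:ℝ)^b), ← Real.rpow_mul (le_of_lt two_pos), mul_comm]
      using this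
  obtain ⟨N, hN⟩ := ((h1.eventually_le_const one_pos).and
    (h2.eventually_ge_atTop 1)).exists_forall_of_atTop
  have key : ∀ l, N ≤ l → P (B l) ≤ ENNReal.ofReal (g l) := by
    intro l hl
    obtain ⟨hl1, hl2⟩ := hN l hl
    refine (h l).trans (ENNReal.ofReal_le_ofReal ?_)
    have hx : -1 ≤ -(C₁ * (2 : ℝ) ^ (-(l : ℝ) * a)) := by linarith
    have hmax : max (1 - C₁ * (2 : ℝ) ^ (-(l : ℝ) * a)) 0
        = 1 + -(C₁ * (2 : ℝ) ^ (-(l : ℝ) * a)) := by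
      rw [max_eq_left (by linarith)]; ring
    rw [hmax]
    have hbern := one_add_mul_self_le_rpow_one_add hx hl2
    have heq : C₂ * (2 : ℝ) ^ ((l : ℝ) * b) * (C₁ * (2 : ℝ) ^ (-(l : ℝ) * a)) = g l := by
      show C₂ * (2 : ℝ) ^ ((l : ℝ) * b) * (C₁ * (2 : ℝ) ^ (-(l : ℝ) * a))
        = C₁ * C₂ * ((2 : ℝ) ^ (b - a)) ^ l
      have : ((2 : ℝ) ^ (b - a)) ^ l = (2 : ℝ) ^ ((l : ℝ) * (b - a)) := by
        rw [← Real.rpow_natCast ((2:ℝ)^(b-a)) l, ← Real.rpow_mul (le_of_lt two_pos),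
          mul_comm]
      have h2' : (2:ℝ) ^ ((l:ℝ) * b) * (2:ℝ) ^ (-(l:ℝ) * a) = (2:ℝ) ^ ((l:ℝ) * (b - a)) := by
        rw [← Real.rpow_add two_pos]; ring_nf
      rw [this]
      linear_combination C₁ * C₂ * h2'
    linarith [hbern, heq]
  -- compare with a summable series
  set f : ℕ → ℝ := fun l => if l < N then 1 else g l with hf
  have hfsum : Summable f := by
    rw [← summable_nat_add_iff N]
    refine (((summable_nat_add_iff N).mpr hgsum).congr fun n => ?_)
    simp [hf, Nat.not_lt.mpr (Nat.le_add_left N n)]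
  have hfkey : ∀ l, P (B l) ≤ ENNReal.ofReal (f l) := by
    intro l
    by_cases hl : l < N
    · simp only [hf, if_pos hl, ENNReal.ofReal_one]
      exact prob_le_one
    · simp only [hf, if_neg hl]
      exact key l (Nat.le_of_not_lt hl)
  have hfnonneg : ∀ l, 0 ≤ f l := by
    intro l
    by_cases hl : l < N <;> simp [hf, hl]
    positivity
  have hfin : ∑' l, P (B l) ≠ ⊤ := by
    refine ne_top_of_le_ne_top ?_ (ENNReal.tsum_le_tsum hfkey)
    rw [← ENNReal.ofReal_tsum_of_nonneg hfnonneg hfsum]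
    exact ENNReal.ofReal_ne_top
  exact hfin
end

section
/- Let N ≥ 1 be a natural number, let v ∈ ℝ³ with ‖v‖ = 1, and let P ⊂ ℝ³ be a finite set with at most N − 1 elements. Then there exists w ∈ ℝ³ with ‖w‖ = 1, ⟨w, v⟩ = 1/2, and ‖w − p‖ ≥ 1/N for every p ∈ P. -/
open scoped RealInnerProductSpace
open Real

private lemma sin_lb_half (N m : ℕ) (hm : 1 ≤ m) (h2 : 2 * m ≤ N) :
    2 / (N : ℝ) ≤ Real.sin (π * m / N) := by
  have hN : (0:ℝ) < N := by
    have h0 : (0:ℕ) < N := by omega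
    exact_mod_cast h0
  have hm' : (1:ℝ) ≤ m := by exact_mod_cast hm
  have h2' : 2 * (m:ℝ) ≤ N := by exact_mod_cast h2
  have hx0 : 0 ≤ π * m / N := by positivity
  have hx : π * m / N ≤ π / 2 := by
    rw [div_le_div_iff₀ hN two_pos]
    nlinarith [pi_pos]
  have hsin := Real.mul_le_sin hx0 hx
  have heq : 2 / π * (π * m / N) = 2 * m / N := by
    have hπ := pi_ne_zero
    field_simp
  have : 2 / (N:ℝ) ≤ 2 * m / N := by gcongr; linarith
  linarith [heq ▸ hsin]

private lemma sin_lb (N m : ℕ) (hm : 1 ≤ m) (hmN : m < N) :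
    2 / (N : ℝ) ≤ Real.sin (π * m / N) := by
  rcases le_or_gt (2 * m) N with h | h
  · exact sin_lb_half N m hm h
  · have hN : (0:ℝ) < N := by
      have h0 : (0:ℕ) < N := by omega
      exact_mod_cast h0
    have key := sin_lb_half N (N - m) (by omega) (by omega)
    have hcast : ((N - m : ℕ) : ℝ) = (N : ℝ) - m := by
      exact Nat.cast_sub hmN.le
    rw [hcast] at key
    have : π * ((N:ℝ) - m) / N = π - π * m / N := by
      field_simp
    rw [this, Real.sin_pi_sub] at key
    exact key

/-- Given at most `N - 1` obstacle points in `ℝ³` and a unit vector `v`, there exists a unit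
vector `w` with `⟪w, v⟫ = 1/2` whose distance to every obstacle is at least `1/N`. -/
theorem exists_free_direction (N : ℕ) (hN : 1 ≤ N) (v : EuclideanSpace ℝ (Fin 3))
    (hv : ‖v‖ = 1) (P : Set (EuclideanSpace ℝ (Fin 3))) (hP : P.Finite)
    (hcard : P.ncard ≤ N - 1) :
    ∃ w : EuclideanSpace ℝ (Fin 3), ‖w‖ = 1 ∧ ⟪w, v⟫ = 1 / 2 ∧
      ∀ p ∈ P, 1 / (N : ℝ) ≤ ‖w - p‖ := by
  classical
  have hNpos : (0:ℝ) < N := by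
    have : (0:ℕ) < N := hN
    exact_mod_cast this
  have hv0 : v ≠ 0 := by
    intro h; rw [h, norm_zero] at hv; norm_num at hv
  -- the orthogonal complement of v is 2-dimensional
  set K := (Submodule.span ℝ {v})ᗮ with hKdef
  have hrank : Module.finrank ℝ K = 2 := by
    have h1 : Module.finrank ℝ (Submodule.span ℝ {v}) = 1 := finrank_span_singleton hv0
    have h2 := Submodule.finrank_add_finrank_orthogonal (𝕜 := ℝ) (Submodule.span ℝ {v})
    rw [h1, finrank_euclideanSpace_fin, ← hKdef] at h2
    omega
  set b := stdOrthonormalBasis ℝ K with hbdef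
  have h0lt : 0 < Module.finrank ℝ K := by omega
  have h1lt : 1 < Module.finrank ℝ K := by omega
  set e₁ : EuclideanSpace ℝ (Fin 3) := ((b ⟨0, h0lt⟩ : K) : EuclideanSpace ℝ (Fin 3)) with he1def
  set e₂ : EuclideanSpace ℝ (Fin 3) := ((b ⟨1, h1lt⟩ : K) : EuclideanSpace ℝ (Fin 3)) with he2def
  have horth := b.orthonormal
  have hb : ∀ i j, ⟪((b i : K) : EuclideanSpace ℝ (Fin 3)), ((b j : K) : EuclideanSpace ℝ (Fin 3))⟫
      = if i = j then (1:ℝ) else 0 := by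
    intro i j
    rw [← Submodule.coe_inner]
    exact orthonormal_iff_ite.mp horth i j
  have he11 : ⟪e₁, e₁⟫ = 1 := by simpa using hb ⟨0, h0lt⟩ ⟨0, h0lt⟩
  have he22 : ⟪e₂, e₂⟫ = 1 := by simpa using hb ⟨1, h1lt⟩ ⟨1, h1lt⟩
  have he12 : ⟪e₁, e₂⟫ = 0 := by
    have := hb ⟨0, h0lt⟩ ⟨1, h1lt⟩
    simpa using this
  have he21 : ⟪e₂, e₁⟫ = 0 := by rw [real_inner_comm]; exact he12
  have hve1 : ⟪v, e₁⟫ = 0 := by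
    have hmem : e₁ ∈ K := Subtype.coe_prop _
    exact (Submodule.mem_orthogonal _ _).mp hmem v (Submodule.mem_span_singleton_self v)
  have hve2 : ⟪v, e₂⟫ = 0 := by
    have hmem : e₂ ∈ K := Subtype.coe_prop _
    exact (Submodule.mem_orthogonal _ _).mp hmem v (Submodule.mem_span_singleton_self v)
  have he1v : ⟪e₁, v⟫ = 0 := by rw [real_inner_comm]; exact hve1
  have he2v : ⟪e₂, v⟫ = 0 := by rw [real_inner_comm]; exact hve2
  have hvv : ⟪v, v⟫ = 1 := by rw [real_inner_self_eq_norm_sq, hv]; norm_num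
  -- inner product of combinations
  have hinner : ∀ c a d c' a' d' : ℝ,
      ⟪c • v + a • e₁ + d • e₂, c' • v + a' • e₁ + d' • e₂⟫
        = c * c' + a * a' + d * d' := by
    intro c a d c' a' d'
    simp only [inner_add_left, inner_add_right, real_inner_smul_left, real_inner_smul_right,
      hvv, he11, he22, he12, he21, hve1, hve2, he1v, he2v]
    ring
  -- the candidate points
  set θ : Fin N → ℝ := fun k => 2 * π * k / N with hθdef
  set w : Fin N → EuclideanSpace ℝ (Fin 3) := fun k =>
    (1/2 : ℝ) • v + (Real.sqrt 3 / 2 * Real.cos (θ k)) • e₁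
      + (Real.sqrt 3 / 2 * Real.sin (θ k)) • e₂ with hwdef
  have hsq3 : Real.sqrt 3 ^ 2 = 3 := Real.sq_sqrt (by norm_num)
  have hwnorm : ∀ k, ‖w k‖ = 1 := by
    intro k
    have h1 : ⟪w k, w k⟫ = 1 := by
      rw [hwdef]
      simp only
      rw [hinner]
      have := Real.sin_sq_add_cos_sq (θ k)
      nlinarith
    rw [real_inner_self_eq_norm_sq] at h1
    calc ‖w k‖ = Real.sqrt (‖w k‖ ^ 2) := (Real.sqrt_sq (norm_nonneg _)).symm
      _ = 1 := by rw [h1, Real.sqrt_one]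
  have hwv : ∀ k, ⟪w k, v⟫ = 1 / 2 := by
    intro k
    rw [hwdef]
    simp only [inner_add_left, real_inner_smul_left, hvv, he1v, he2v]
    ring
  -- pairwise separation
  have hpair : ∀ j k : Fin N, j ≠ k → 2 / (N:ℝ) ≤ ‖w j - w k‖ := by
    have key : ∀ j k : Fin N, (k:ℕ) < (j:ℕ) → 2 / (N:ℝ) ≤ ‖w j - w k‖ := by
      intro j k hkj
      have hdiff : w j - w k = (0:ℝ) • v
          + (Real.sqrt 3 / 2 * Real.cos (θ j) - Real.sqrt 3 / 2 * Real.cos (θ k)) • e₁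
          + (Real.sqrt 3 / 2 * Real.sin (θ j) - Real.sqrt 3 / 2 * Real.sin (θ k)) • e₂ := by
        rw [hwdef]; module
      obtain ⟨m, hmdef⟩ : ∃ m : ℕ, m = (j:ℕ) - (k:ℕ) := ⟨_, rfl⟩
      have hm1 : 1 ≤ m := by omega
      have hmN : m < N := by omega
      have hmcast : (m:ℝ) = (j:ℕ) - (k:ℕ) := by
        rw [hmdef]; push_cast [Nat.cast_sub hkj.le]; ring
      have hhalf : (θ j - θ k) / 2 = π * m / N := by
        rw [hθdef]; simp only; rw [hmcast]; field_simp
      have hcosd : Real.cos (θ j - θ k) = 1 - 2 * Real.sin (π * m / N) ^ 2 := by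
        have hs := Real.sin_sq_eq_half_sub ((θ j - θ k) / 2)
        have ht : θ j - θ k = 2 * (π * ↑m / ↑N) := by linarith only [hhalf]
        rw [ht]
        rw [hhalf] at hs
        linarith only [hs]
      have hinn : ⟪w j - w k, w j - w k⟫ = 3 * Real.sin (π * m / N) ^ 2 := by
        rw [hdiff, hinner]
        have hcs := Real.cos_sub (θ j) (θ k)
        have h1 := Real.sin_sq_add_cos_sq (θ j)
        have h2 := Real.sin_sq_add_cos_sq (θ k)
        linear_combination ((Real.cos (θ j) - Real.cos (θ k))^2
            + (Real.sin (θ j) - Real.sin (θ k))^2)/4 * hsq3 + (3/4) * h1 + (3/4) * h2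
          + (3/2) * hcs - (3/2) * hcosd
      have hsin := sin_lb N m hm1 hmN
      have h2N : 0 ≤ 2 / (N:ℝ) := by positivity
      have hsq : (2 / (N:ℝ)) ^ 2 ≤ ‖w j - w k‖ ^ 2 := by
        rw [← real_inner_self_eq_norm_sq, hinn]
        have hs2 : (2 / (N:ℝ)) ^ 2 ≤ Real.sin (π * m / N) ^ 2 := by
          apply pow_le_pow_left₀ h2N hsin
        linarith only [hs2, sq_nonneg (Real.sin (π * m / N))]
      have h0 : 0 ≤ ‖w j - w k‖ := norm_nonneg _
      calc 2 / (N:ℝ) = Real.sqrt ((2 / (N:ℝ)) ^ 2) := (Real.sqrt_sq h2N).symm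
        _ ≤ Real.sqrt (‖w j - w k‖ ^ 2) := Real.sqrt_le_sqrt hsq
        _ = ‖w j - w k‖ := Real.sqrt_sq h0
    intro j k hjk
    rcases lt_or_gt_of_ne (fun h => hjk (Fin.ext h) : (j:ℕ) ≠ (k:ℕ)) with h | h
    · rw [norm_sub_rev]; exact key k j h
    · exact key j k h
  -- pigeonhole
  by_contra hcon
  push_neg at hcon
  choose p hpP hplt using fun k => hcon (w k) (hwnorm k) (hwv k)
  have hinj : Function.Injective p := by
    intro j k h
    by_contra hne
    have h1 := hpair j k hne
    have h2 : ‖w j - w k‖ ≤ ‖w j - p j‖ + ‖w k - p k‖ := by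
      calc ‖w j - w k‖ = ‖(w j - p j) + (p k - w k)‖ := by rw [h, sub_add_sub_cancel]
        _ ≤ ‖w j - p j‖ + ‖p k - w k‖ := norm_add_le _ _
        _ = ‖w j - p j‖ + ‖w k - p k‖ := by rw [norm_sub_rev (p k)]
    have h3 := hplt j
    have h4 := hplt k
    have h5 : 2 / (N:ℝ) = 1 / N + 1 / N := by ring
    linarith only [h1, h2, h3, h4, h5]
  haveI : Finite ↥P := hP.to_subtype
  have hcard2 : Nat.card (Fin N) ≤ Nat.card ↥P :=
    Nat.card_le_card_of_injective (fun k => (⟨p k, hpP k⟩ : ↥P))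
      (fun j k h => hinj (congrArg Subtype.val h))
  rw [Nat.card_eq_fintype_card, Fintype.card_fin, Nat.card_coe_set_eq] at hcard2
  omega
end

section
/- Let x, c, y ∈ ℝ³ with x ≠ c, let ρ > 0, and suppose ‖y − c‖ ≤ ρ and 2ρ ≤ ‖c − x‖. Then y ≠ x and ‖ (y − x)/‖y − x‖ − (c − x)/‖c − x‖ ‖ ≤ 2ρ/‖c − x‖. -/
/-- Radial projection of a small ball: if `‖y - c‖ ≤ ρ` and `2ρ ≤ ‖c - x‖`, then `y ≠ x` and
the unit directions of `y - x` and `c - x` differ by at most `2ρ / ‖c - x‖`. -/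
theorem radial_projection_estimate (x c y : EuclideanSpace ℝ (Fin 3)) (hxc : x ≠ c)
    (ρ : ℝ) (hρ : 0 < ρ) (hy : ‖y - c‖ ≤ ρ) (hcx : 2 * ρ ≤ ‖c - x‖) :
    y ≠ x ∧ ‖‖y - x‖⁻¹ • (y - x) - ‖c - x‖⁻¹ • (c - x)‖ ≤ 2 * ρ / ‖c - x‖ := by
  have hb : (0:ℝ) < ‖c - x‖ := by
    rw [norm_pos_iff]
    exact sub_ne_zero_of_ne (Ne.symm hxc)
  have hcy : ‖c - y‖ ≤ ρ := by rw [← norm_neg]; simpa using hy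
  have ha : ρ ≤ ‖y - x‖ := by
    have h := norm_sub_norm_le (c - x) (c - y)
    have h2 : c - x - (c - y) = y - x := by abel
    rw [h2] at h
    linarith
  have ha0 : (0:ℝ) < ‖y - x‖ := lt_of_lt_of_le hρ ha
  have hyx : y ≠ x := by
    intro h
    rw [h] at ha0
    simp at ha0
  refine ⟨hyx, ?_⟩
  set a := y - x with hadef
  set b := c - x with hbdef
  have hab : ‖a - b‖ ≤ ρ := by
    have h : a - b = -(c - y) := by rw [hadef, hbdef]; abel
    rw [h, norm_neg]; exact hcy
  have key : ‖a‖⁻¹ • a - ‖b‖⁻¹ • b = ‖b‖⁻¹ • (a - b) + (‖a‖⁻¹ - ‖b‖⁻¹) • a := by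
    module
  rw [key]
  have h1 : ‖(‖b‖⁻¹ • (a - b))‖ ≤ ρ / ‖b‖ := by
    rw [norm_smul, norm_inv, norm_norm, div_eq_inv_mul]
    exact mul_le_mul_of_nonneg_left hab (by positivity)
  have h2 : ‖((‖a‖⁻¹ - ‖b‖⁻¹) • a)‖ ≤ ρ / ‖b‖ := by
    rw [norm_smul, Real.norm_eq_abs]
    have hba : |‖b‖ - ‖a‖| ≤ ρ := by
      rw [abs_sub_comm]
      exact le_trans (abs_norm_sub_norm_le a b) hab
    have heq : |‖a‖⁻¹ - ‖b‖⁻¹| = |‖b‖ - ‖a‖| / (‖a‖ * ‖b‖) := by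
      rw [inv_sub_inv (ne_of_gt ha0) (ne_of_gt hb), abs_div,
        abs_of_pos (mul_pos ha0 hb)]
    rw [heq]
    calc |‖b‖ - ‖a‖| / (‖a‖ * ‖b‖) * ‖a‖ = |‖b‖ - ‖a‖| / ‖b‖ := by
          field_simp
      _ ≤ ρ / ‖b‖ := by gcongr
  calc ‖‖b‖⁻¹ • (a - b) + (‖a‖⁻¹ - ‖b‖⁻¹) • a‖
      ≤ ‖‖b‖⁻¹ • (a - b)‖ + ‖(‖a‖⁻¹ - ‖b‖⁻¹) • a‖ := norm_add_le _ _
    _ ≤ ρ / ‖b‖ + ρ / ‖b‖ := add_le_add h1 h2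
    _ = 2 * ρ / ‖b‖ := by ring
end

section
/- Let ε ∈ (0,1), let α > 1, let n be a natural number, let c₁, …, c_n ∈ ℝ³, and let r₁, …, r_n ≥ 0. Set H = ⋃_{j=1}^n closedBall(c_j, ε^α r_j). Then the Lebesgue measure of the set {x ∈ ℝ³ : dist(x, H) ≤ ε^α} is at most (32π/3) · ε^{3(α−1)} · ( ε³ n + ε³ ∑_{j=1}^n r_j³ ). -/
/-- The closed `ε^α`-neighborhood of the union of the balls `closedBall (cⱼ) (ε^α rⱼ)`,
`j = 1, …, n`, has volume at most `(32π/3) ε^{3(α-1)} (ε³ n + ε³ ∑ⱼ rⱼ³)`. -/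
theorem volume_neighborhood_of_balls (ε : ℝ) (hε : 0 < ε) (hε1 : ε < 1) (α : ℝ)
    (hα : 1 < α) (n : ℕ) (c : Fin n → EuclideanSpace ℝ (Fin 3)) (r : Fin n → ℝ)
    (hr : ∀ j, 0 ≤ r j) :
    MeasureTheory.volume
        (Metric.cthickening (ε ^ α) (⋃ j, Metric.closedBall (c j) (ε ^ α * r j))) ≤
      ENNReal.ofReal ((32 * Real.pi / 3) * ε ^ (3 * (α - 1)) *
        (ε ^ (3 : ℕ) * n + ε ^ (3 : ℕ) * ∑ j, r j ^ (3 : ℕ))) := by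
  set δ := ε ^ α with hδdef
  have hδ : 0 < δ := Real.rpow_pos_of_pos hε α
  -- Step 1: inclusion into a union of enlarged balls
  have hclosed : IsClosed (⋃ j, Metric.closedBall (c j) (δ * r j)) :=
    isClosed_iUnion_of_finite fun j => Metric.isClosed_closedBall
  have hsub : Metric.cthickening δ (⋃ j, Metric.closedBall (c j) (δ * r j)) ⊆
      ⋃ j, Metric.closedBall (c j) (δ + δ * r j) := by
    rw [hclosed.cthickening_eq_biUnion_closedBall hδ.le]
    intro x hx
    simp only [Set.mem_iUnion] at hx ⊢
    obtain ⟨y, ⟨j, hyj⟩, hxy⟩ := hx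
    refine ⟨j, ?_⟩
    rw [Metric.mem_closedBall] at *
    calc dist x (c j) ≤ dist x y + dist y (c j) := dist_triangle _ _ _
      _ ≤ δ + δ * r j := add_le_add hxy hyj
  refine le_trans (MeasureTheory.measure_mono hsub) ?_
  refine le_trans (MeasureTheory.measure_iUnion_le _) ?_
  -- Step 2: volume of each ball
  have hvol : ∀ j, MeasureTheory.volume (Metric.closedBall (c j) (δ + δ * r j)) =
      ENNReal.ofReal ((δ + δ * r j) ^ (3 : ℕ) * (4 / 3 * Real.pi)) := by
    intro j
    rw [EuclideanSpace.volume_closedBall, Fintype.card_fin]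
    have h0 : 0 ≤ r j := hr j
    have hR : 0 ≤ δ + δ * r j := by positivity
    rw [← ENNReal.ofReal_pow hR, ← ENNReal.ofReal_mul (pow_nonneg hR 3)]
    congr 1
    have hΓ : Real.Gamma ((3 : ℕ) / 2 + 1) = 3 / 4 * Real.sqrt Real.pi := by
      have : ((3 : ℕ) : ℝ) / 2 + 1 = 3 / 2 + 1 := by norm_num
      rw [this, Real.Gamma_add_one (by norm_num)]
      have : (3 : ℝ) / 2 = 1 / 2 + 1 := by norm_num
      rw [this, Real.Gamma_add_one (by norm_num), Real.Gamma_one_half_eq]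
      ring
    rw [hΓ]
    have hπ : Real.sqrt Real.pi ^ (3 : ℕ) = Real.pi * Real.sqrt Real.pi := by
      nlinarith [Real.sq_sqrt Real.pi_pos.le, Real.sqrt_nonneg Real.pi]
    rw [hπ]
    have hs : Real.sqrt Real.pi ≠ 0 := by positivity
    field_simp
  rw [tsum_fintype]
  simp_rw [hvol]
  rw [← ENNReal.ofReal_sum_of_nonneg (fun j _ => mul_nonneg (pow_nonneg (by have := hr j; positivity) 3) (by positivity))]
  apply ENNReal.ofReal_le_ofReal
  -- Step 3: real arithmetic
  have hkey : ∀ j, (δ + δ * r j) ^ (3 : ℕ) ≤ δ ^ (3 : ℕ) * (4 * (1 + r j ^ (3 : ℕ))) := by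
    intro j
    have h := hr j
    have : (1 + r j) ^ (3 : ℕ) ≤ 4 * (1 + r j ^ (3 : ℕ)) := by nlinarith [sq_nonneg (1 - r j), sq_nonneg (r j)]
    calc (δ + δ * r j) ^ (3:ℕ) = δ ^ (3:ℕ) * (1 + r j) ^ (3:ℕ) := by ring
      _ ≤ δ ^ (3:ℕ) * (4 * (1 + r j ^ (3:ℕ))) := by
          exact mul_le_mul_of_nonneg_left this (by positivity)
  have hδ3 : δ ^ (3 : ℕ) = ε ^ (3 * (α - 1)) * ε ^ (3 : ℕ) := by
    rw [hδdef, ← Real.rpow_natCast ε 3, ← Real.rpow_natCast (ε ^ α) 3,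
      ← Real.rpow_mul hε.le, ← Real.rpow_add hε]
    norm_num
    ring_nf
  calc ∑ j, (δ + δ * r j) ^ (3:ℕ) * (4 / 3 * Real.pi)
      ≤ ∑ j, δ ^ (3:ℕ) * (4 * (1 + r j ^ (3:ℕ))) * (4 / 3 * Real.pi) := by
        refine Finset.sum_le_sum fun j _ => ?_
        exact mul_le_mul_of_nonneg_right (hkey j) (by positivity)
    _ = (16 * Real.pi / 3) * ε ^ (3 * (α - 1)) *
        (ε ^ (3:ℕ) * n + ε ^ (3:ℕ) * ∑ j, r j ^ (3:ℕ)) := by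
        have hterm : ∀ j : Fin n, ε ^ (3*(α-1)) * ε ^ (3:ℕ) * (4 * (1 + r j ^ (3:ℕ))) * (4 / 3 * Real.pi)
            = 16 * Real.pi / 3 * ε ^ (3*(α-1)) * ε ^ (3:ℕ)
              + 16 * Real.pi / 3 * ε ^ (3*(α-1)) * (ε ^ (3:ℕ) * r j ^ (3:ℕ)) := fun j => by ring
        simp_rw [hδ3, hterm, Finset.sum_add_distrib, Finset.sum_const, ← Finset.mul_sum,
          Finset.card_univ, Fintype.card_fin, nsmul_eq_mul]
        ring
    _ ≤ (32 * Real.pi / 3) * ε ^ (3 * (α - 1)) *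
        (ε ^ (3:ℕ) * n + ε ^ (3:ℕ) * ∑ j, r j ^ (3:ℕ)) := by
        have h1 : (0:ℝ) ≤ ε ^ (3 * (α - 1)) := (Real.rpow_pos_of_pos hε _).le
        have h2 : (0:ℝ) ≤ ε ^ (3:ℕ) * n + ε ^ (3:ℕ) * ∑ j, r j ^ (3:ℕ) := by
          have : (0:ℝ) ≤ ∑ j, r j ^ (3:ℕ) :=
            Finset.sum_nonneg fun j _ => pow_nonneg (hr j) 3
          positivity
        nlinarith [mul_nonneg (mul_nonneg Real.pi_pos.le h1) h2]
end
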